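/- arXiv:1609.08937 — 2 statements merged into one kernel-verified Lean document; each statement's English description precedes it below -/
import Mathlib

section
/- Let A, B, B', C be complex-valued multiplicative characters of a finite field F_q with q elements, let x ∈ F_q, and let y ∈ F_q with y ≠ 1. Then F₂(A;B,B';C,B';x,y) = -ε(y)·Ā(1-y)·₂F₁(A,B;C | x/(1-y)) + Ā(-y)·C̄(x)·(B̄C)(1-x) + Ā(-y)·C̄(x)·(B̄C)(1-x)·(-1 + (q-1)·δ(AB̄')) + B̄'(y)·{AB̄' choose B̄'}·₂F₁(AB̄', B; C | x). -/
open Finset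

noncomputable instance {F : Type*} [Field F] [Fintype F] : Fintype (MulChar F ℂ) :=
  Fintype.ofFinite _

/-- Finite-field binomial coefficient `{A choose B} = B(-1) · J(A, B̄)`,
where `J(χ,λ) = ∑_u χ(u)·λ(1-u)` is the Jacobi sum. -/
noncomputable def binom {F : Type*} [Field F] [Fintype F] (A B : MulChar F ℂ) : ℂ :=
  B (-1) * ∑ u : F, A u * B⁻¹ (1 - u)

/-- Finite-field Gauss hypergeometric series
`₂F₁(A,B;C|x) = ε(x)·(BC)(-1)·∑_y B(y)·(B̄C)(1-y)·Ā(1-xy)`. -/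
noncomputable def gauss2F1 {F : Type*} [Field F] [Fintype F]
    (A B C : MulChar F ℂ) (x : F) : ℂ :=
  (1 : MulChar F ℂ) x * (B * C) (-1) *
    ∑ y : F, B y * (B⁻¹ * C) (1 - y) * A⁻¹ (1 - x * y)

/-- Finite-field `₃F₂` hypergeometric series. -/
noncomputable def hyper3F2 {F : Type*} [Field F] [Fintype F]
    (A₀ A₁ A₂ B₁ B₂ : MulChar F ℂ) (x : F) : ℂ :=
  ((Fintype.card F : ℂ) - 1)⁻¹ *
    ∑ χ : MulChar F ℂ,
      binom (A₀ * χ) χ * binom (A₁ * χ) (B₁ * χ) * binom (A₂ * χ) (B₂ * χ) * χ x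

/-- Finite-field Appell series
`F₂(A;B,B';C,C';x,y) = ε(xy)·(BB'CC')(-1)·∑_{u,v} B(u)B'(v)(B̄C)(1-u)(B̄'C')(1-v)·Ā(1-ux-vy)`. -/
noncomputable def appellF2 {F : Type*} [Field F] [Fintype F]
    (A B B' C C' : MulChar F ℂ) (x y : F) : ℂ :=
  (1 : MulChar F ℂ) (x * y) * (B * B' * C * C') (-1) *
    ∑ u : F, ∑ v : F,
      B u * B' v * (B⁻¹ * C) (1 - u) * (B'⁻¹ * C') (1 - v) * A⁻¹ (1 - u * x - v * y)

open scoped Classical in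
/-- `δ(x) = 1` if `x = 0`, and `0` otherwise. -/
noncomputable def deltaF {F : Type*} [Field F] (x : F) : ℂ :=
  if x = 0 then 1 else 0

open scoped Classical in
/-- `δ(χ) = 1` if `χ = ε` (the trivial character), and `0` otherwise. -/
noncomputable def deltaChar {F : Type*} [Field F] [Fintype F] (χ : MulChar F ℂ) : ℂ :=
  if χ = 1 then 1 else 0

/-!
With `C' = B'` the factor `(B̄'C')(1-v)` is `ε(1-v)`, so the inner `v`-sum of `F₂` is a complete
sum minus its `v = 1` term. With `c = 1 - ux`, scaling `v` turns the complete sum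
`∑_v B'(v)Ā(c - vy)` into `B̄'(y)(B'Ā)(c)·J(B',Ā)` when `c ≠ 0`, and it is
`Ā(-y)∑_v (B'Ā)(v) = Ā(-y)(q-1)δ(AB̄')` at `u = 1/x`. Summed over `u`, the first part gives the
`₂F₁(AB̄',B;C|x)` term, because `J(B',Ā) = {AB̄' choose B̄'}` (substitute `w = 1 - 1/t`), and the
second gives the middle terms. The removed `v = 1` term factors as `Ā(1-y)Ā(1 - ux/(1-y))`, which
sums to the `₂F₁(A,B;C|x/(1-y))` term.
-/

namespace MulChar

section CommRing

variable {R R' : Type*} [CommRing R] [CommRing R']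

lemma apply_neg_one_mul_self (χ : MulChar R R') : χ (-1) * χ (-1) = 1 := by
  rw [← map_mul, neg_one_mul, neg_neg, map_one]

end CommRing

variable {F R : Type*} [Field F] [CommRing R]

lemma inv_apply_neg_one (χ : MulChar F R) : χ⁻¹ (-1) = χ (-1) := by
  rw [inv_apply', inv_neg, inv_one]

lemma apply_inv_mul_apply_one_sub_inv (χ ψ : MulChar F R) {x : F} (hx : x ≠ 0) :
    χ x⁻¹ * (χ⁻¹ * ψ) (1 - x⁻¹) = (χ * ψ) (-1) * (ψ⁻¹ x * (χ⁻¹ * ψ) (1 - x)) := by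
  have hχx : χ x⁻¹ * χ x = 1 := by rw [← map_mul, inv_mul_cancel₀ hx, map_one]
  rw [show 1 - x⁻¹ = -1 * x⁻¹ * (1 - x) by field_simp; ring]
  simp only [map_mul, mul_apply, inv_apply', inv_inv, inv_neg, inv_one]
  linear_combination (χ (-1) * ψ (-1) * ψ x⁻¹ * ψ (1 - x) * χ (1 - x)⁻¹) * hχx

lemma sum_one_apply_one_sub_mul [Fintype F] [DecidableEq F] (f : F → R) :
    ∑ v, (1 : MulChar F R) (1 - v) * f v = ∑ v, f v - f 1 := by
  have h1 : (1 : MulChar F R) (1 - 1) * f 1 = 0 := by simp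
  rw [← sum_erase (univ : Finset F) h1, ← sum_erase_eq_sub (mem_univ 1)]
  refine sum_congr rfl fun v hv => ?_
  rw [one_apply (sub_ne_zero.mpr (ne_of_mem_erase hv).symm).isUnit, one_mul]

end MulChar

section Jacobi

variable {F R : Type*} [Field F] [Fintype F] [CommRing R]

lemma jacobiSum_eq_apply_neg_one_mul_jacobiSum (χ ψ : MulChar F R) :
    jacobiSum χ ψ = χ (-1) * jacobiSum (χ * ψ)⁻¹ χ := by
  have hbij : Function.Bijective fun t : F => 1 - t⁻¹ :=
    (Equiv.subLeft 1).bijective.comp inv_involutive.bijective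
  rw [jacobiSum, ← Fintype.sum_bijective _ hbij (fun t => χ (1 - t⁻¹) * ψ (1 - (1 - t⁻¹))) _
    fun _ => rfl, jacobiSum, mul_sum]
  refine sum_congr rfl fun t _ => ?_
  rcases eq_or_ne t 0 with rfl | ht
  · simp [MulChar.map_zero]
  rw [sub_sub_cancel, show 1 - t⁻¹ = -1 * (1 - t) * t⁻¹ by field_simp; ring]
  simp only [map_mul, MulChar.mul_apply, MulChar.inv_apply']
  ring

lemma sum_apply_mul_apply_sub_mul [DecidableEq F] (χ ψ : MulChar F R) (c : F) {y : F}
    (hy : y ≠ 0) :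
    ∑ v, χ v * ψ (c - v * y) =
      χ⁻¹ y * (χ * ψ) c * jacobiSum χ ψ + if c = 0 then ψ (-y) * ∑ v, (χ * ψ) v else 0 := by
  rcases eq_or_ne c 0 with rfl | hc
  · simp only [MulChar.map_zero, mul_zero, zero_mul, if_true, zero_add, mul_sum]
    refine sum_congr rfl fun v _ => ?_
    rw [zero_sub, ← mul_neg, mul_comm, map_mul, MulChar.mul_apply]
    ring
  rw [if_neg hc, add_zero, jacobiSum, ← Fintype.sum_bijective _ (mulLeft_bijective₀ _
    (div_ne_zero hc hy)) (fun w => χ (c / y * w) * ψ (c - c / y * w * y)) _ fun _ => rfl, mul_sum]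
  refine sum_congr rfl fun w _ => ?_
  rw [show c - c / y * w * y = c * (1 - w) by field_simp, div_eq_mul_inv]
  simp only [map_mul, MulChar.mul_apply, MulChar.inv_apply']
  ring

end Jacobi

section Hypergeometric

variable {F : Type*} [Field F] [Fintype F]

lemma sum_apply_eq_card_sub_one_mul_deltaChar (χ : MulChar F ℂ) :
    ∑ a, χ a = ((Fintype.card F : ℂ) - 1) * deltaChar χ := by
  classical
  unfold deltaChar
  split_ifs with h
  · rw [h, MulChar.sum_one_eq_card_units, Fintype.card_units, mul_one,
      Nat.cast_sub Fintype.card_pos, Nat.cast_one]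
  · rw [MulChar.sum_eq_zero_of_ne_one h, mul_zero]

lemma deltaChar_inv (χ : MulChar F ℂ) : deltaChar χ⁻¹ = deltaChar χ := by
  simp only [deltaChar, inv_eq_one]

lemma binom_mul_inv_inv (A B : MulChar F ℂ) : binom (A * B⁻¹) B⁻¹ = jacobiSum B A⁻¹ := by
  rw [jacobiSum_eq_apply_neg_one_mul_jacobiSum, mul_inv_rev, inv_inv, binom,
    MulChar.inv_apply_neg_one, inv_inv]
  rfl

lemma gauss2F1_of_ne_zero (A B C : MulChar F ℂ) {x : F} (hx : x ≠ 0) :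
    gauss2F1 A B C x = (B * C) (-1) * ∑ y, B y * (B⁻¹ * C) (1 - y) * A⁻¹ (1 - x * y) := by
  rw [gauss2F1, MulChar.one_apply hx.isUnit, one_mul]

lemma appellF2_Bprime_Bprime_eq_sum (A B B' C : MulChar F ℂ) {x y : F} (hx : x ≠ 0)
    (hy : y ≠ 0) :
    appellF2 A B B' C B' x y = (B * C) (-1) * ∑ u, B u * (B⁻¹ * C) (1 - u) *
      (∑ v, B' v * A⁻¹ (1 - u * x - v * y) - A⁻¹ (1 - u * x - y)) := by
  classical
  have hsign : (B * B' * C * B') (-1) = (B * C) (-1) := by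
    simp only [MulChar.mul_apply]
    linear_combination B (-1) * C (-1) * B'.apply_neg_one_mul_self
  rw [appellF2, MulChar.one_apply (mul_ne_zero hx hy).isUnit, one_mul, hsign, MulChar.inv_mul]
  congr 1
  refine sum_congr rfl fun u _ => ?_
  have h := MulChar.sum_one_apply_one_sub_mul fun v => B' v * A⁻¹ (1 - u * x - v * y)
  simp only [map_one, one_mul] at h
  rw [← h, mul_sum]
  exact sum_congr rfl fun v _ => by ring

lemma appellF2_inner_sum_sub_eq [DecidableEq F] (A B' : MulChar F ℂ) {x y : F} (hx : x ≠ 0)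
    (hy₀ : y ≠ 0) (hy₁ : y ≠ 1) (u : F) :
    ∑ v, B' v * A⁻¹ (1 - u * x - v * y) - A⁻¹ (1 - u * x - y) =
      B'⁻¹ y * binom (A * B'⁻¹) B'⁻¹ * (A * B'⁻¹)⁻¹ (1 - x * u) +
        (if u = x⁻¹ then A⁻¹ (-y) * ((Fintype.card F : ℂ) - 1) * deltaChar (A * B'⁻¹) else 0) -
        A⁻¹ (1 - y) * A⁻¹ (1 - x / (1 - y) * u) := by
  have hAB : (A * B'⁻¹)⁻¹ = B' * A⁻¹ := by rw [mul_inv, inv_inv, mul_comm]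
  have hc : 1 - x * u = 0 ↔ u = x⁻¹ := by
    rw [sub_eq_zero, eq_comm, mul_comm, mul_eq_one_iff_eq_inv₀ hx]
  have hsplit : 1 - u * x - y = (1 - y) * (1 - x / (1 - y) * u) := by
    field_simp [sub_ne_zero.mpr hy₁.symm]
    ring
  rw [sum_apply_mul_apply_sub_mul _ _ _ hy₀, sum_apply_eq_card_sub_one_mul_deltaChar, ← hAB,
    deltaChar_inv, hsplit, map_mul, mul_comm u x, binom_mul_inv_inv]
  simp only [hc]
  split_ifs <;> ring

end Hypergeometric

/-- reduction formula for `F₂(A;B,B';C,B';x,y)`, `y ≠ 1`. -/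
theorem appellF2_Cprime_eq_Bprime {F : Type*} [Field F] [Fintype F]
    (A B B' C : MulChar F ℂ) (x y : F) (hy : y ≠ 1) :
    appellF2 A B B' C B' x y =
      -(1 : MulChar F ℂ) y * A⁻¹ (1 - y) * gauss2F1 A B C (x / (1 - y)) +
      A⁻¹ (-y) * C⁻¹ x * (B⁻¹ * C) (1 - x) +
      A⁻¹ (-y) * C⁻¹ x * (B⁻¹ * C) (1 - x) *
        (-1 + ((Fintype.card F : ℂ) - 1) * deltaChar (A * B'⁻¹)) +
      B'⁻¹ y * binom (A * B'⁻¹) B'⁻¹ * gauss2F1 (A * B'⁻¹) B C x := by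
  classical
  rcases eq_or_ne x 0 with rfl | hx
  · simp [appellF2, gauss2F1, MulChar.map_zero]
  rcases eq_or_ne y 0 with rfl | hy₀
  · simp [appellF2, gauss2F1, MulChar.map_zero]
  set K := A⁻¹ (-y) * ((Fintype.card F : ℂ) - 1) * deltaChar (A * B'⁻¹)
  have hterm : ∀ u, B u * (B⁻¹ * C) (1 - u) *
      (∑ v, B' v * A⁻¹ (1 - u * x - v * y) - A⁻¹ (1 - u * x - y)) =
        B'⁻¹ y * binom (A * B'⁻¹) B'⁻¹ * (B u * (B⁻¹ * C) (1 - u) * (A * B'⁻¹)⁻¹ (1 - x * u)) +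
        (if u = x⁻¹ then B x⁻¹ * (B⁻¹ * C) (1 - x⁻¹) * K else 0) -
        A⁻¹ (1 - y) * (B u * (B⁻¹ * C) (1 - u) * A⁻¹ (1 - x / (1 - y) * u)) := by
    intro u
    rw [appellF2_inner_sum_sub_eq A B' hx hy₀ hy u]
    split_ifs with hu
    · rw [hu]
      ring
    · ring
  rw [appellF2_Bprime_Bprime_eq_sum _ _ _ _ hx hy₀, gauss2F1_of_ne_zero _ _ _ hx,
    gauss2F1_of_ne_zero _ _ _ (div_ne_zero hx (sub_ne_zero.mpr hy.symm)),
    MulChar.one_apply hy₀.isUnit, sum_congr rfl fun u _ => hterm u, sum_sub_distrib,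
    sum_add_distrib, ← mul_sum, ← mul_sum, sum_ite_eq', if_pos (mem_univ _),
    MulChar.apply_inv_mul_apply_one_sub_inv _ _ hx]
  linear_combination (C⁻¹ x * (B⁻¹ * C) (1 - x) * K) * (B * C).apply_neg_one_mul_self
end

section
/- Let A, B, B', C, C' be complex-valued multiplicative characters of a finite field F_q with q elements and let x ∈ F_q with x ≠ 1. Then F₂(A;B,B';C,C';x,1-x) = (CB'C')(-1)·Ā(1-x)·₃F₂(A, B̄C, AC̄'; C, AB'C̄' | -x/(1-x)). -/
open Finset

/-!
Substituting `u ↦ 1 - u`, `v ↦ 1 - v` in `F₂` factors the argument of `Ā` as `(1 - x)(v - u t)`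
with `t = -x/(1-x)`. On the `₃F₂` side, `{Xχ choose Yχ} = Y(-1) ∑_w X(w) Ȳ(1-w) χ(w/(w-1))`, so by
orthogonality of characters `∑_χ {Xχ choose Yχ} χ(z) = (q-1) Ȳ(z) (X̄Y)(1-z)`, which removes one of
the three summations of `₃F₂`. The two that remain become those of `F₂` under the substitutions
`a = v/(v-1)` and `b = t a u/(u-1)`, since `u ↦ u/(u-1)` permutes `F ∖ {1}`.
-/

section DivSubOne

variable {F : Type*} [Field F]

/-- `u ↦ u / (u - 1)` is an involution of `F ∖ {1}`; division by zero sends `1` to `0`. -/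
def divSubOne (u : F) : F := u / (u - 1)

@[simp] lemma divSubOne_zero : divSubOne (0 : F) = 0 := by simp [divSubOne]

@[simp] lemma divSubOne_one : divSubOne (1 : F) = 0 := by simp [divSubOne]

lemma divSubOne_ne_zero {u : F} (h0 : u ≠ 0) (h1 : u ≠ 1) : divSubOne u ≠ 0 :=
  div_ne_zero h0 (sub_ne_zero.mpr h1)

lemma divSubOne_sub_one {u : F} (hu : u ≠ 1) : divSubOne u - 1 = (u - 1)⁻¹ := by
  have := sub_ne_zero.mpr hu
  rw [divSubOne]
  field_simp
  ring

lemma divSubOne_ne_one (u : F) : divSubOne u ≠ 1 := by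
  rcases eq_or_ne u 1 with rfl | hu
  · simp
  · rw [← sub_ne_zero, divSubOne_sub_one hu]
    exact inv_ne_zero (sub_ne_zero.mpr hu)

lemma divSubOne_divSubOne {u : F} (hu : u ≠ 1) : divSubOne (divSubOne u) = u := by
  have := sub_ne_zero.mpr hu
  rw [divSubOne, divSubOne_sub_one hu, divSubOne]
  field_simp

lemma mul_divSubOne_eq_one_iff {s w : F} (hs : s ≠ 0) :
    s * divSubOne w = 1 ↔ w * (1 - s) = 1 := by
  rcases eq_or_ne w 1 with rfl | hw
  · simp [hs]
  · rw [divSubOne, mul_div_assoc', div_eq_one_iff_eq (sub_ne_zero.mpr hw)]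
    constructor <;> intro h <;> linear_combination -h

lemma divSubOne_eq_mul_sub_one {u : F} (hu : u ≠ 1) : divSubOne u = u * (divSubOne u - 1) := by
  rw [divSubOne_sub_one hu, divSubOne, div_eq_mul_inv]

variable {R : Type*} [CommMonoidWithZero R]

lemma MulChar.apply_divSubOne (χ : MulChar F R) (u : F) :
    χ (divSubOne u) = χ (-1) * χ u * χ⁻¹ (1 - u) := by
  rw [MulChar.inv_apply', ← map_mul, ← map_mul, divSubOne, div_eq_mul_inv, ← neg_sub u 1, inv_neg]
  congr 1
  ring

lemma MulChar.apply_one_sub_divSubOne (χ : MulChar F R) {u : F} (hu : u ≠ 1) :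
    χ (1 - divSubOne u) = χ⁻¹ (1 - u) := by
  rw [MulChar.inv_apply', ← neg_sub, divSubOne_sub_one hu, ← inv_neg, neg_sub]

lemma MulChar.apply_divSubOne_mul_apply_one_sub (χ ψ : MulChar F R) (v : F) :
    χ (divSubOne v) * ψ (1 - divSubOne v) = χ (-1) * χ v * (χ * ψ)⁻¹ (1 - v) := by
  rcases eq_or_ne v 1 with rfl | hv
  · simp
  · rw [χ.apply_divSubOne, ψ.apply_one_sub_divSubOne hv, mul_inv, MulChar.mul_apply, mul_assoc]

end DivSubOne

section Sums

variable {F : Type*} [Field F] [Fintype F]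

lemma sum_comp_divSubOne {M : Type*} [AddCommMonoid M] (f : F → M) (hf : f 1 = f 0) :
    ∑ u, f (divSubOne u) = ∑ u, f u := by
  classical
  let g : F → F := fun u => if u = 1 then 1 else divSubOne u
  have hg : Function.Involutive g := by
    intro u
    by_cases hu : u = 1
    · simp [g, hu]
    · simp [g, hu, divSubOne_ne_one, divSubOne_divSubOne hu]
  calc ∑ u, f (divSubOne u) = ∑ u, f (g u) :=
        sum_congr rfl fun u _ => by by_cases hu : u = 1 <;> simp [g, hu, hf]
    _ = ∑ u, f u := Equiv.sum_comp (hg.toPerm g) f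

lemma sum_comp_one_sub {M : Type*} [AddCommMonoid M] (f : F → M) :
    ∑ u, f (1 - u) = ∑ u, f u :=
  Equiv.sum_comp (Equiv.subLeft 1) f

lemma MulChar.sum_apply_mul_apply_one_sub_mul {R : Type*} [CommRing R] (χ ψ : MulChar F R)
    (g : F → R) :
    ∑ a, χ a * ψ (1 - a) * g a =
      χ (-1) * ∑ v, χ v * (χ * ψ)⁻¹ (1 - v) * g (divSubOne v) := by
  rw [← sum_comp_divSubOne _ (by simp), mul_sum]
  refine sum_congr rfl fun v _ => ?_
  rw [χ.apply_divSubOne_mul_apply_one_sub ψ]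
  ring

lemma MulChar.sum_apply_mul_apply_divSubOne_mul {R : Type*} [CommRing R] (A : MulChar F R)
    (g : F → R) (hg : g 0 = 0) {d : F} (hd : d ≠ 0) :
    ∑ u, A u * A⁻¹ (divSubOne u * d) * g (divSubOne u * d) = ∑ b, A⁻¹ (b - d) * g b := by
  have pointwise : ∀ u, A u * A⁻¹ (divSubOne u * d) * g (divSubOne u * d) =
      A⁻¹ (divSubOne u * d - d) * g (divSubOne u * d) := by
    intro u
    rcases eq_or_ne u 0 with rfl | hu0
    · simp [hg]
    rcases eq_or_ne u 1 with rfl | hu1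
    · simp [hg]
    have : divSubOne u * d = u * (divSubOne u * d - d) := by
      rw [← sub_one_mul, ← mul_assoc, ← divSubOne_eq_mul_sub_one hu1]
    have hA : A u * A⁻¹ (divSubOne u * d) = A⁻¹ (divSubOne u * d - d) := by
      conv_lhs => rw [this, map_mul, ← mul_assoc, MulChar.inv_apply' A u, ← map_mul,
        mul_inv_cancel₀ hu0, map_one, one_mul]
    rw [hA]
  calc ∑ u, A u * A⁻¹ (divSubOne u * d) * g (divSubOne u * d)
      = ∑ u, A⁻¹ (divSubOne u * d - d) * g (divSubOne u * d) :=
        sum_congr rfl fun u _ => pointwise u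
    _ = ∑ c, A⁻¹ (c * d - d) * g (c * d) :=
        sum_comp_divSubOne (fun c => A⁻¹ (c * d - d) * g (c * d)) (by simp [hg])
    _ = ∑ b, A⁻¹ (b - d) * g b :=
        Fintype.sum_bijective _ (mulRight_bijective₀ d hd) _ _ fun _ => rfl

lemma sum_mulChar_apply_one : ∑ χ : MulChar F ℂ, χ 1 = (Fintype.card F : ℂ) - 1 := by
  have hcard : Nat.card (MulChar F ℂ) = Fintype.card F - 1 := by
    rw [MulChar.card_eq_card_units_of_hasEnoughRootsOfUnity, Nat.card_units,
      Nat.card_eq_fintype_card]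
  simp only [map_one, Finset.sum_const, Finset.card_univ, nsmul_eq_mul, mul_one,
    ← Nat.card_eq_fintype_card (α := MulChar F ℂ), hcard]
  rw [Nat.cast_sub Fintype.card_pos, Nat.cast_one]

lemma sum_mulChar_apply_of_ne_one {a : F} (ha : a ≠ 1) : ∑ χ : MulChar F ℂ, χ a = 0 := by
  obtain ⟨χ, hχ⟩ := MulChar.exists_apply_ne_one_of_hasEnoughRootsOfUnity F ℂ ha
  refine eq_zero_of_mul_eq_self_left hχ ?_
  simp only [mul_sum, ← MulChar.mul_apply]
  exact Fintype.sum_bijective _ (Group.mulLeft_bijective χ) _ _ fun _ => rfl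

lemma binom_mul_eq_sum (X χ : MulChar F ℂ) :
    binom (X * χ) χ = ∑ u, X u * χ (divSubOne u) := by
  rw [binom, mul_sum]
  refine sum_congr rfl fun u _ => ?_
  rw [MulChar.mul_apply, χ.apply_divSubOne]
  ring

lemma binom_mul_mul_eq_sum (X Y χ : MulChar F ℂ) :
    binom (X * χ) (Y * χ) = Y (-1) * ∑ w, X w * Y⁻¹ (1 - w) * χ (divSubOne w) := by
  rw [binom, mul_sum, mul_sum]
  refine sum_congr rfl fun w _ => ?_
  rw [mul_inv, MulChar.mul_apply, MulChar.mul_apply, MulChar.mul_apply, χ.apply_divSubOne]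
  ring

lemma sum_binom_mul_mul_apply (X Y : MulChar F ℂ) (z : F) :
    ∑ χ : MulChar F ℂ, binom (X * χ) (Y * χ) * χ z =
      ((Fintype.card F : ℂ) - 1) * (Y⁻¹ z * (X⁻¹ * Y) (1 - z)) := by
  have hsum : ∑ χ : MulChar F ℂ, binom (X * χ) (Y * χ) * χ z =
      Y (-1) * ∑ w, X w * Y⁻¹ (1 - w) * ∑ χ : MulChar F ℂ, χ (divSubOne w * z) := by
    simp only [binom_mul_mul_eq_sum, mul_sum, sum_mul, map_mul]
    rw [sum_comm]
    refine sum_congr rfl fun w _ => sum_congr rfl fun χ _ => ?_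
    ring
  rcases eq_or_ne z 0 with rfl | hz0
  · simp [MulChar.map_zero]
  rcases eq_or_ne z 1 with rfl | hz1
  · rw [hsum]
    simp [sum_mulChar_apply_of_ne_one (divSubOne_ne_one _), MulChar.map_zero]
  have h1z : 1 - z ≠ 0 := sub_ne_zero.mpr hz1.symm
  have hroot : ∀ w, divSubOne w * z = 1 ↔ w = (1 - z)⁻¹ := fun w => by
    rw [mul_comm, mul_divSubOne_eq_one_iff hz0, mul_eq_one_iff_eq_inv₀ h1z]
  rw [hsum, sum_eq_single (1 - z)⁻¹, (hroot _).mpr rfl, sum_mulChar_apply_one]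
  · have hX : X (1 - z)⁻¹ = X⁻¹ (1 - z) := (X.inv_apply' _).symm
    have hY : Y (-1) * Y⁻¹ (1 - (1 - z)⁻¹) = Y⁻¹ z * Y (1 - z) := by
      have : 1 - (1 - z)⁻¹ = (-1 * z⁻¹ * (1 - z))⁻¹ := by
        field_simp
        ring
      rw [this, MulChar.inv_apply', inv_inv, map_mul, map_mul, ← MulChar.inv_apply', ← mul_assoc,
        ← mul_assoc, ← map_mul, neg_one_mul, neg_neg, map_one, one_mul]
    rw [MulChar.mul_apply, ← hX]
    linear_combination ((Fintype.card F : ℂ) - 1) * X (1 - z)⁻¹ * hY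
  · intro w _ hw
    rw [sum_mulChar_apply_of_ne_one (mt (hroot w).mp hw), mul_zero]
  · simp

lemma hyper3F2_eq_sum (A₀ A₁ A₂ B₁ B₂ : MulChar F ℂ) (t : F) :
    hyper3F2 A₀ A₁ A₂ B₁ B₂ t = B₁ (-1) * ∑ u, ∑ v, A₀ u * (A₁ v * B₁⁻¹ (1 - v)) *
      (B₂⁻¹ (divSubOne u * (divSubOne v * t)) *
        (A₂⁻¹ * B₂) (1 - divSubOne u * (divSubOne v * t))) := by
  have hq : (Fintype.card F : ℂ) - 1 ≠ 0 := by
    rw [sub_ne_zero, Ne, Nat.cast_eq_one]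
    exact Fintype.one_lt_card.ne'
  have expand : ∀ χ : MulChar F ℂ,
      binom (A₀ * χ) χ * binom (A₁ * χ) (B₁ * χ) * binom (A₂ * χ) (B₂ * χ) * χ t =
        B₁ (-1) * ∑ u, ∑ v, A₀ u * (A₁ v * B₁⁻¹ (1 - v)) *
          (binom (A₂ * χ) (B₂ * χ) * χ (divSubOne u * (divSubOne v * t))) := by
    intro χ
    simp only [binom_mul_eq_sum, binom_mul_mul_eq_sum A₁ B₁, sum_mul, mul_sum, map_mul]
    rw [sum_comm]
    refine sum_congr rfl fun u _ => sum_congr rfl fun v _ => ?_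
    ring
  rw [hyper3F2, sum_congr rfl fun χ _ => expand χ, ← mul_sum, sum_comm]
  simp_rw [sum_comm (s := (Finset.univ : Finset (MulChar F ℂ))), ← mul_sum,
    sum_binom_mul_mul_apply, mul_sum]
  refine sum_congr rfl fun u _ => sum_congr rfl fun v _ => ?_
  field_simp

lemma hyper3F2_mul_inv_eq_sum (A A₁ B₁ D E : MulChar F ℂ) {t : F} (ht : t ≠ 0) :
    hyper3F2 A A₁ (A * D⁻¹) B₁ (A * E * D⁻¹) t = B₁ (-1) * ∑ v, A₁ v * B₁⁻¹ (1 - v) *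
      ∑ b, A⁻¹ (b - divSubOne v * t) * ((E⁻¹ * D) b * E (1 - b)) := by
  have hB₂ : (A * E * D⁻¹)⁻¹ = A⁻¹ * (E⁻¹ * D) := by simp [mul_comm, mul_left_comm]
  have hA₂B₂ : (A * D⁻¹)⁻¹ * (A * E * D⁻¹) = E := by simp [mul_left_comm, mul_assoc]
  rw [hyper3F2_eq_sum, hB₂, hA₂B₂, sum_comm]
  congr 1
  refine sum_congr rfl fun v _ => ?_
  rcases eq_or_ne v 0 with rfl | hv0
  · simp [MulChar.map_zero]
  rcases eq_or_ne v 1 with rfl | hv1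
  · simp [MulChar.map_zero]
  rw [← MulChar.sum_apply_mul_apply_divSubOne_mul A (fun b => (E⁻¹ * D) b * E (1 - b))
    (by simp [MulChar.map_zero]) (mul_ne_zero (divSubOne_ne_zero hv0 hv1) ht), mul_sum]
  refine sum_congr rfl fun u _ => ?_
  rw [MulChar.mul_apply]
  ring

lemma appellF2_one_sub_eq_sum (A B B' C C' : MulChar F ℂ) {x : F} (hx0 : x ≠ 0) (hx1 : x ≠ 1) :
    appellF2 A B B' C C' x (1 - x) = (B * B' * C * C') (-1) * A⁻¹ (1 - x) *
      ∑ a, (B⁻¹ * C) a * B (1 - a) *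
        ∑ b, A⁻¹ (b - a * (-x / (1 - x))) * ((B'⁻¹ * C') b * B' (1 - b)) := by
  have h1x : 1 - x ≠ 0 := sub_ne_zero.mpr hx1.symm
  have hε : (1 : MulChar F ℂ) (x * (1 - x)) = 1 :=
    MulChar.one_apply (mul_ne_zero hx0 h1x).isUnit
  have hlin : ∀ a b : F,
      1 - (1 - a) * x - (1 - b) * (1 - x) = (1 - x) * (b - a * (-x / (1 - x))) := by
    intro a b
    field_simp
    ring
  rw [appellF2, hε, one_mul, ← sum_comp_one_sub (F := F) (M := ℂ), mul_sum, mul_sum]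
  refine sum_congr rfl fun a _ => ?_
  rw [← sum_comp_one_sub (F := F) (M := ℂ), mul_sum, mul_sum, mul_sum]
  refine sum_congr rfl fun b _ => ?_
  rw [hlin, map_mul, sub_sub_cancel, sub_sub_cancel]
  ring

end Sums

/-- F₂ evaluated on the line `x + y = 1` reduces to a ₃F₂, `x ≠ 1`. -/
theorem appellF2_line {F : Type*} [Field F] [Fintype F]
    (A B B' C C' : MulChar F ℂ) (x : F) (hx : x ≠ 1) :
    appellF2 A B B' C C' x (1 - x) =
      (C * B' * C') (-1) * A⁻¹ (1 - x) *
        hyper3F2 A (B⁻¹ * C) (A * C'⁻¹) C (A * B' * C'⁻¹) (-x / (1 - x)) := by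
  rcases eq_or_ne x 0 with rfl | hx0
  · simp [appellF2, hyper3F2, MulChar.map_zero]
  have ht : -x / (1 - x) ≠ 0 := div_ne_zero (neg_ne_zero.mpr hx0) (sub_ne_zero.mpr hx.symm)
  rw [appellF2_one_sub_eq_sum A B B' C C' hx0 hx, hyper3F2_mul_inv_eq_sum A _ C C' B' ht,
    MulChar.sum_apply_mul_apply_one_sub_mul, inv_mul_cancel_comm]
  have hB : B (-1) * B (-1) = 1 := by rw [← map_mul, neg_one_mul, neg_neg, map_one]
  rw [← mul_assoc, ← mul_assoc]
  congr 1
  simp only [MulChar.mul_apply, MulChar.inv_apply' B, inv_neg_one]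
  linear_combination B' (-1) * C (-1) * C (-1) * C' (-1) * A⁻¹ (1 - x) * hB
end
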